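/- Let X be a measurable space and let g, h index two groups. For each k ∈ {g,h}, let μ_k be the source feature distribution of group k (a probability measure on X), let ν_k be the target feature distribution with ν_k ≪ μ_k and square-integrable reweighting coefficient ω_k = dν_k/dμ_k, and let f_k : X → [0,1] be the measurable acceptance probability of a fixed policy for group k. Writing β_k = ∫ f_k dμ_k, the target demographic-parity violation is bounded by the source violation plus a variance term: |∫ f_g dν_g − ∫ f_h dν_h| ≤ |β_g − β_h| + Σ_{k∈{g,h}} sqrt( β_k(1 − β_k) · Var_{μ_k}(ω_k) ), where Var_{μ_k}(ω_k) = ∫ (ω_k − 1)² dμ_k. -/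

import Mathlib

open MeasureTheory
open scoped ENNReal

-- Cauchy-Schwarz for integrals
lemma cs_aux {X : Type*} [MeasurableSpace X] {μ : Measure X} {φ ψ : X → ℝ}
    (hφ : MemLp φ 2 μ) (hψ : MemLp ψ 2 μ) :
    |∫ x, φ x * ψ x ∂μ| ≤ Real.sqrt (∫ x, φ x ^ 2 ∂μ) * Real.sqrt (∫ x, ψ x ^ 2 ∂μ) := by
  have habs : |∫ x, φ x * ψ x ∂μ| ≤ ∫ x, |φ x| * |ψ x| ∂μ := by
    simpa [Real.norm_eq_abs, abs_mul] using
      norm_integral_le_integral_norm (μ := μ) (fun x => φ x * ψ x)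
  have hφa : MemLp (fun x => |φ x|) 2 μ := by simpa [Real.norm_eq_abs] using hφ.norm
  have hψa : MemLp (fun x => |ψ x|) 2 μ := by simpa [Real.norm_eq_abs] using hψ.norm
  have hpq : (2 : ℝ).HolderConjugate 2 := Real.holderConjugate_iff.mpr ⟨one_lt_two, by norm_num⟩
  have h := integral_mul_le_Lp_mul_Lq_of_nonneg hpq
    (Filter.Eventually.of_forall fun x => abs_nonneg (φ x))
    (Filter.Eventually.of_forall fun x => abs_nonneg (ψ x))
    (by simpa using hφa) (by simpa using hψa)
  have hconv : ∀ u : X → ℝ, (∫ x, |u x| ^ (2:ℝ) ∂μ) ^ (1/(2:ℝ)) = Real.sqrt (∫ x, u x ^ 2 ∂μ) := by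
    intro u
    rw [Real.sqrt_eq_rpow]
    congr 1
    refine integral_congr_ae (Filter.Eventually.of_forall fun x => ?_)
    show |u x| ^ (2:ℝ) = u x ^ 2
    rw [show ((2:ℝ)) = ((2:ℕ):ℝ) by norm_num, Real.rpow_natCast, sq_abs]
  calc |∫ x, φ x * ψ x ∂μ| ≤ ∫ x, |φ x| * |ψ x| ∂μ := habs
    _ ≤ (∫ x, |φ x| ^ (2:ℝ) ∂μ) ^ (1/(2:ℝ)) * (∫ x, |ψ x| ^ (2:ℝ) ∂μ) ^ (1/(2:ℝ)) := h
    _ = _ := by rw [hconv, hconv]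

lemma one_group {X : Type*} [MeasurableSpace X] (μ ν : Measure X)
    [IsProbabilityMeasure μ] [IsProbabilityMeasure ν] (hac : ν ≪ μ)
    (hω : MemLp (fun x => (ν.rnDeriv μ x).toReal) 2 μ)
    (f : X → ℝ) (hf : Measurable f) (hf01 : ∀ x, 0 ≤ f x ∧ f x ≤ 1) :
    |∫ x, f x ∂ν - ∫ x, f x ∂μ| ≤
      Real.sqrt ((∫ x, f x ∂μ) * (1 - ∫ x, f x ∂μ)
        * ∫ x, ((ν.rnDeriv μ x).toReal - 1) ^ 2 ∂μ) := by
  set ω : X → ℝ := fun x => (ν.rnDeriv μ x).toReal with hωdef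
  set β : ℝ := ∫ x, f x ∂μ with hβ
  have hfmem : MemLp f 2 μ := by
    refine (memLp_top_of_bound hf.aestronglyMeasurable 1
      (Filter.Eventually.of_forall fun x => ?_)).mono_exponent le_top
    rw [Real.norm_eq_abs, abs_le]
    exact ⟨by linarith [(hf01 x).1], (hf01 x).2⟩
  have hfint : Integrable f μ := hfmem.integrable one_le_two
  have hωint : Integrable ω μ := hω.integrable one_le_two
  have hφ : MemLp (fun x => f x - β) 2 μ := hfmem.sub (memLp_const β)
  have hψ : MemLp (fun x => ω x - 1) 2 μ := hω.sub (memLp_const 1)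
  have hω1 : ∫ x, ω x ∂μ = 1 := by
    rw [hωdef, Measure.integral_toReal_rnDeriv hac]; simp
  have hfω : Integrable (fun x => ω x * f x) μ := by
    have h12 : (1 : ℝ≥0∞)/1 = 1/2 + 1/2 := by
      simp only [one_div]; rw [ENNReal.inv_two_add_inv_two, inv_one]
    have := hfmem.smul hω (r := 1)
    rw [memLp_one_iff_integrable] at this
    exact this
  have hchg : ∫ x, f x ∂ν = ∫ x, ω x * f x ∂μ := by
    rw [← integral_rnDeriv_smul hac]
    simp [hωdef, smul_eq_mul]
  have hint1 : Integrable (fun x => ω x * f x - f x) μ := hfω.sub hfint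
  have hint2 : Integrable (fun x => β * (ω x - 1)) μ :=
    (hωint.sub (integrable_const 1)).const_mul β
  have hintψ : Integrable (fun x => ω x - 1) μ := hωint.sub (integrable_const 1)
  have hkey : ∫ x, f x ∂ν - β = ∫ x, (f x - β) * (ω x - 1) ∂μ := by
    have heq : ∀ x, (f x - β) * (ω x - 1) = (ω x * f x - f x) - β * (ω x - 1) := by
      intro x; ring
    rw [integral_congr_ae (Filter.Eventually.of_forall heq),
      integral_sub hint1 hint2, integral_sub hfω hfint, integral_const_mul,
      integral_sub hωint (integrable_const 1), hω1, hchg]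
    simp [hβ]
  have hβ0 : 0 ≤ β := integral_nonneg fun x => (hf01 x).1
  have hβ1 : β ≤ 1 := by
    calc β ≤ ∫ _x, (1:ℝ) ∂μ := integral_mono hfint (integrable_const 1) fun x => (hf01 x).2
      _ = 1 := by simp
  have hint_sq : Integrable (fun x => f x ^ 2) μ := hfmem.integrable_sq
  have hsqle : ∫ x, (f x - β) ^ 2 ∂μ ≤ β * (1 - β) := by
    have heq : ∀ x, (f x - β) ^ 2 = (f x ^ 2 - (2*β) * f x) + β ^ 2 := by
      intro x; ring
    have hintA : Integrable (fun x => f x ^ 2 - 2 * β * f x) μ :=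
      hint_sq.sub (hfint.const_mul _)
    rw [integral_congr_ae (Filter.Eventually.of_forall heq),
      integral_add hintA (integrable_const _),
      integral_sub hint_sq (hfint.const_mul _), integral_const_mul, integral_const]
    have hsq : ∫ x, f x ^ 2 ∂μ ≤ β := by
      refine integral_mono hint_sq hfint fun x => ?_
      nlinarith [(hf01 x).1, (hf01 x).2]
    simp only [measure_univ, probReal_univ, ENNReal.toReal_one, smul_eq_mul, one_mul]
    nlinarith
  calc |∫ x, f x ∂ν - β| = |∫ x, (f x - β) * (ω x - 1) ∂μ| := by rw [hkey]
    _ ≤ Real.sqrt (∫ x, (f x - β) ^ 2 ∂μ) * Real.sqrt (∫ x, (ω x - 1) ^ 2 ∂μ) :=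
        cs_aux hφ hψ
    _ ≤ Real.sqrt (β * (1 - β)) * Real.sqrt (∫ x, (ω x - 1) ^ 2 ∂μ) :=
        mul_le_mul_of_nonneg_right (Real.sqrt_le_sqrt hsqle) (Real.sqrt_nonneg _)
    _ = Real.sqrt (β * (1 - β) * ∫ x, (ω x - 1) ^ 2 ∂μ) :=
        (Real.sqrt_mul (mul_nonneg hβ0 (by linarith)) _).symm

/-- **Theorem 3 (demographic parity under covariate shift, two groups).** For each
group `k ∈ {g,h}` with source feature distribution `μ_k`, target feature distribution
`ν_k ≪ μ_k` with square-integrable reweighting coefficient `ω_k = dν_k/dμ_k`, and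
`[0,1]`-valued acceptance probability `f_k`, writing `β_k = ∫ f_k dμ_k`, the target
demographic-parity violation is bounded by the source violation plus variance terms:
`|∫ f_g dν_g − ∫ f_h dν_h| ≤ |β_g − β_h| + ∑_k sqrt(β_k (1 − β_k) Var_{μ_k}(ω_k))`. -/
theorem dp_covariate_shift_bound {X : Type*} [MeasurableSpace X]
    (μg μh νg νh : Measure X)
    [IsProbabilityMeasure μg] [IsProbabilityMeasure μh]
    [IsProbabilityMeasure νg] [IsProbabilityMeasure νh]
    (hacg : νg ≪ μg) (hach : νh ≪ μh)
    (hωg : MemLp (fun x => (νg.rnDeriv μg x).toReal) 2 μg)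
    (hωh : MemLp (fun x => (νh.rnDeriv μh x).toReal) 2 μh)
    (fg fh : X → ℝ) (hfg : Measurable fg) (hfh : Measurable fh)
    (hfg01 : ∀ x, 0 ≤ fg x ∧ fg x ≤ 1) (hfh01 : ∀ x, 0 ≤ fh x ∧ fh x ≤ 1) :
    |∫ x, fg x ∂νg - ∫ x, fh x ∂νh| ≤
      |(∫ x, fg x ∂μg) - ∫ x, fh x ∂μh|
      + Real.sqrt ((∫ x, fg x ∂μg) * (1 - ∫ x, fg x ∂μg)
          * ∫ x, ((νg.rnDeriv μg x).toReal - 1) ^ 2 ∂μg)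
      + Real.sqrt ((∫ x, fh x ∂μh) * (1 - ∫ x, fh x ∂μh)
          * ∫ x, ((νh.rnDeriv μh x).toReal - 1) ^ 2 ∂μh) := by
  have h1 := one_group μg νg hacg hωg fg hfg hfg01
  have h2 := one_group μh νh hach hωh fh hfh hfh01
  have htri : |∫ x, fg x ∂νg - ∫ x, fh x ∂νh| ≤
      |(∫ x, fg x ∂μg) - ∫ x, fh x ∂μh|
      + |∫ x, fg x ∂νg - ∫ x, fg x ∂μg|
      + |∫ x, fh x ∂νh - ∫ x, fh x ∂μh| := by
    have e : ∫ x, fg x ∂νg - ∫ x, fh x ∂νh =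
        ((∫ x, fg x ∂μg) - ∫ x, fh x ∂μh)
        + (∫ x, fg x ∂νg - ∫ x, fg x ∂μg)
        + -(∫ x, fh x ∂νh - ∫ x, fh x ∂μh) := by ring
    rw [e]
    calc _ ≤ |((∫ x, fg x ∂μg) - ∫ x, fh x ∂μh)
        + (∫ x, fg x ∂νg - ∫ x, fg x ∂μg)|
        + |-(∫ x, fh x ∂νh - ∫ x, fh x ∂μh)| := abs_add_le _ _
      _ ≤ _ := by
        rw [abs_neg]
        exact add_le_add (abs_add_le _ _) le_rfl
  linarith
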